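/- Let 𝒜 ⊂ ℕ be a finite set of positive integers and let Q, Q' be points of 𝕋² = ℝ²/ℤ² with rational coordinates. For every ε > 0 there exists l* > 0 such that every line segment L ⊂ 𝕋² with midpoint Q, irrational slope [a_1, a_2, …] with all a_i ∈ 𝒜, and length greater than l*, satisfies dist(L, Q') < ε. -/

import Mathlib

/-! The slopes `α = [a₁, a₂, …]` with all `aᵢ ∈ 𝒜` form a compact set of irrationals: a closed
subset of `[0, 1]`, and a rational number has too short an expansion. For irrational `α` the
group `ℤα + ℤ` is dense in `ℝ`, and by compactness the `m` with `mα` within `ε` of a prescribed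
point modulo `1` can be taken with `|m| ≤ N` for one `N` serving all these slopes. Moving along
the segment until the first coordinate has changed by `q₁' - q₁ + m` changes the second one by
`(q₁' - q₁ + m) α`, so a suitable `|m| ≤ N` lands within `ε` of `Q'`; this needs arc length at
most `2 (|q₁' - q₁| + N)` on either side of `Q`.
-/

/-- The value of the finite continued fraction `[a₁,…,aₙ]`. -/
noncomputable def cfFin : List ℕ → ℝ
  | [] => 0
  | a :: l => 1 / ((a : ℝ) + cfFin l)

/-- `α = [a₁, a₂, …]`: the finite truncations of the continued fraction with partial
quotients `a 0 = a₁, a 1 = a₂, …` converge to `α`. -/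
def cfLim (a : ℕ → ℕ) (α : ℝ) : Prop :=
  Filter.Tendsto (fun n => cfFin (List.ofFn fun i : Fin n => a i)) Filter.atTop (nhds α)

open Set Filter

noncomputable def cfVal : List ℕ → ℝ → ℝ
  | [], t => t
  | a :: l, t => 1 / ((a : ℝ) + cfVal l t)

@[simp] lemma cfVal_nil (t : ℝ) : cfVal [] t = t := rfl

@[simp] lemma cfVal_cons (a : ℕ) (l : List ℕ) (t : ℝ) :
    cfVal (a :: l) t = 1 / ((a : ℝ) + cfVal l t) := rfl

lemma cfFin_eq_cfVal (l : List ℕ) : cfFin l = cfVal l 0 := by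
  induction l with
  | nil => rfl
  | cons a l ih => simp [cfFin, ih]

lemma cfVal_append (l₁ l₂ : List ℕ) (t : ℝ) :
    cfVal (l₁ ++ l₂) t = cfVal l₁ (cfVal l₂ t) := by
  induction l₁ with
  | nil => rfl
  | cons a l ih => simp [ih]

section digits

variable {l : List ℕ} (hl : ∀ x ∈ l, 1 ≤ x)
include hl

lemma cfVal_mem_Icc {t : ℝ} (ht : t ∈ Icc 0 1) : cfVal l t ∈ Icc 0 1 := by
  induction l with
  | nil => exact ht
  | cons a l ih =>
    have ha : (1 : ℝ) ≤ a := mod_cast hl a List.mem_cons_self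
    have hv := ih fun x hx => hl x (List.mem_cons_of_mem a hx)
    rw [cfVal_cons]
    have hpos : (0 : ℝ) < a + cfVal l t := by linarith [hv.1]
    exact ⟨div_nonneg zero_le_one hpos.le, (div_le_one hpos).mpr (by linarith [hv.1])⟩

lemma cfVal_pos (hne : l ≠ []) {t : ℝ} (ht : t ∈ Icc 0 1) : 0 < cfVal l t := by
  obtain ⟨a, l, rfl⟩ := List.exists_cons_of_ne_nil hne
  have ha : (1 : ℝ) ≤ a := mod_cast hl a List.mem_cons_self
  have hv := cfVal_mem_Icc (fun x hx => hl x (List.mem_cons_of_mem a hx)) ht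
  rw [cfVal_cons]
  exact one_div_pos.mpr (by linarith [hv.1])

lemma continuousOn_cfVal : ContinuousOn (cfVal l) (Icc 0 1) := by
  induction l with
  | nil => exact continuousOn_id
  | cons a l ih =>
    have hl' : ∀ x ∈ l, 1 ≤ x := fun x hx => hl x (List.mem_cons_of_mem a hx)
    have ha : (1 : ℝ) ≤ a := mod_cast hl a List.mem_cons_self
    refine continuousOn_const.div (continuousOn_const.add (ih hl')) fun t ht => ?_
    linarith [(cfVal_mem_Icc hl' ht).1]

/-- Rational numbers have terminating expansions: each digit peeled off a rational value in
`(0, 1)` replaces it by `1 / r - a`, whose denominator is the numerator of `r < 1`. -/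
lemma length_le_den_of_cfVal_eq {t : ℝ} (ht : t ∈ Icc 0 1) {r : ℚ} (hr : cfVal l t = r) :
    l.length ≤ r.den := by
  induction l generalizing r with
  | nil => exact Nat.zero_le _
  | cons a l ih =>
    have hl' : ∀ x ∈ l, 1 ≤ x := fun x hx => hl x (List.mem_cons_of_mem a hx)
    rcases eq_or_ne l [] with rfl | hne
    · exact r.den_pos
    have ha : (1 : ℝ) ≤ a := mod_cast hl a List.mem_cons_self
    have hβ := cfVal_pos hl' hne ht
    rw [cfVal_cons] at hr
    have hr0 : 0 < r := by
      have : (0 : ℝ) < r := hr ▸ one_div_pos.mpr (by linarith)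
      exact_mod_cast this
    have hr1 : r < 1 := by
      have : (r : ℝ) < 1 := hr ▸ (div_lt_one (by linarith)).mpr (by linarith)
      exact_mod_cast this
    have htail : cfVal l t = ((r⁻¹ - a : ℚ) : ℝ) := by
      push_cast
      rw [← hr]
      field_simp
      ring
    have hden : (r⁻¹ - a).den = r.num.natAbs := by
      rw [Rat.sub_natCast_den, Rat.den_inv_of_ne_zero hr0.ne']
    have hnum : r.num.natAbs < r.den := by
      have := Rat.num_lt_denom_iff.mpr hr1
      have := Rat.num_pos.mpr hr0
      omega
    have := ih hl' htail
    simp only [List.length_cons]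
    omega

end digits

/-- The numbers `[a₁, a₂, …]` with all `aᵢ ∈ 𝒜`, as the intersection over `n` of the images
of `[0, 1]` under the cylinder maps `t ↦ [a₁, …, aₙ + t]`. -/
def cfSet (𝒜 : Finset ℕ) : Set ℝ :=
  ⋂ n : ℕ, ⋃ d : Fin n → 𝒜, cfVal (List.ofFn fun i => (d i : ℕ)) '' Icc 0 1

section cfSet

variable {𝒜 : Finset ℕ}

lemma cfSet_subset_Icc : cfSet 𝒜 ⊆ Icc 0 1 := by
  intro α hα
  obtain ⟨d, hd⟩ := mem_iUnion.mp (mem_iInter.mp hα 0)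
  simpa using hd

variable (h𝒜 : ∀ x ∈ 𝒜, 1 ≤ x)
include h𝒜

lemma one_le_of_mem_ofFn {n : ℕ} (d : Fin n → 𝒜) :
    ∀ x ∈ List.ofFn fun i => (d i : ℕ), 1 ≤ x := by
  simp only [List.mem_ofFn, forall_exists_index]
  rintro _ i rfl
  exact h𝒜 _ (d i).2

lemma isCompact_cfSet : IsCompact (cfSet 𝒜) :=
  isCompact_Icc.of_isClosed_subset
    (isClosed_iInter fun _ => isClosed_iUnion_of_finite fun d =>
      (isCompact_Icc.image_of_continuousOn
        (continuousOn_cfVal (one_le_of_mem_ofFn h𝒜 d))).isClosed)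
    cfSet_subset_Icc

lemma mem_cfSet_of_cfLim {a : ℕ → ℕ} (ha : ∀ i, a i ∈ 𝒜) {α : ℝ} (hlim : cfLim a α) :
    α ∈ cfSet 𝒜 := by
  refine mem_iInter.mpr fun n => mem_iUnion.mpr ⟨fun i => ⟨a i, ha i⟩, ?_⟩
  set l := List.ofFn fun i : Fin n => a i
  have hl : ∀ x ∈ l, 1 ≤ x := one_le_of_mem_ofFn h𝒜 fun i => ⟨a i, ha i⟩
  have htail : ∀ m, cfFin (List.ofFn fun i : Fin (n + m) => a i) ∈ cfVal l '' Icc 0 1 := by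
    intro m
    set r := List.ofFn fun j : Fin m => a (n + j)
    have hr : ∀ x ∈ r, 1 ≤ x := one_le_of_mem_ofFn h𝒜 fun j => ⟨a (n + j), ha _⟩
    have hsplit : (List.ofFn fun i : Fin (n + m) => a i) = l ++ r := List.ofFn_add
    rw [hsplit, cfFin_eq_cfVal, cfVal_append]
    exact mem_image_of_mem _ (cfVal_mem_Icc hr ⟨le_rfl, zero_le_one⟩)
  exact (isCompact_Icc.image_of_continuousOn (continuousOn_cfVal hl)).isClosed.mem_of_tendsto
    (hlim.comp ((tendsto_add_atTop_nat n).congr fun m => add_comm m n))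
    (Eventually.of_forall htail)

lemma irrational_of_mem_cfSet {α : ℝ} (hα : α ∈ cfSet 𝒜) : Irrational α := by
  rintro ⟨r, rfl⟩
  obtain ⟨d, t, ht, hr⟩ := mem_iUnion.mp (mem_iInter.mp hα (r.den + 1))
  simpa using length_le_den_of_cfVal_eq (one_le_of_mem_ofFn h𝒜 d) ht hr

end cfSet

lemma Irrational.exists_int_mul_add_int_near {α : ℝ} (h : Irrational α) (y : ℝ) {ε : ℝ}
    (hε : 0 < ε) : ∃ m n : ℤ, |m * α + n - y| < ε := by
  have hd : Dense (AddSubgroup.closure {α, 1} : Set ℝ) :=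
    dense_addSubgroupClosure_pair_iff.mpr (by simpa using h)
  obtain ⟨z, hz, hzs⟩ := Metric.dense_iff.mp hd y ε hε
  obtain ⟨m, n, rfl⟩ := AddSubgroup.mem_closure_pair.mp hzs
  exact ⟨m, n, by simpa [Real.dist_eq, abs_sub_comm] using hz⟩

/-- Compactness of `K × [0, 1]` suffices since the condition is `1`-periodic in `y`. -/
lemma IsCompact.exists_natAbs_le_forall_int_mul_add_int_near {K : Set ℝ} (hK : IsCompact K)
    (hirr : ∀ α ∈ K, Irrational α) {ε : ℝ} (hε : 0 < ε) :
    ∃ N : ℕ, ∀ α ∈ K, ∀ y : ℝ, ∃ m n : ℤ, m.natAbs ≤ N ∧ |m * α + n - y| < ε := by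
  let U : ℤ × ℤ → Set (ℝ × ℝ) := fun p => {x | |p.1 * x.1 + p.2 - x.2| < ε}
  have hU : ∀ p, IsOpen (U p) := fun p => isOpen_lt (by fun_prop) continuous_const
  have hcover : K ×ˢ Icc 0 1 ⊆ ⋃ p, U p := by
    rintro ⟨α, y⟩ ⟨hα, -⟩
    obtain ⟨m, n, h⟩ := (hirr α hα).exists_int_mul_add_int_near y hε
    exact mem_iUnion.mpr ⟨(m, n), h⟩
  obtain ⟨s, hs⟩ := (hK.prod isCompact_Icc).elim_finite_subcover U hU hcover
  refine ⟨s.sup fun p => p.1.natAbs, fun α hα y => ?_⟩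
  obtain ⟨p, hp, hlt⟩ :=
    mem_iUnion₂.mp (hs (mk_mem_prod hα ⟨Int.fract_nonneg y, (Int.fract_lt_one y).le⟩))
  refine ⟨p.1, p.2 + ⌊y⌋, Finset.le_sup (f := fun p => p.1.natAbs) hp, ?_⟩
  have hshift : (p.1 : ℝ) * α + ((p.2 + ⌊y⌋ : ℤ) : ℝ) - y = p.1 * α + p.2 - Int.fract y := by
    rw [Int.fract]
    push_cast
    ring
  rw [hshift]
  exact hlt

theorem stmt18 (𝒜 : Finset ℕ) (h𝒜 : ∀ x ∈ 𝒜, 1 ≤ x)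
    (q₁ q₂ q₁' q₂' : ℚ) (ε : ℝ) (hε : 0 < ε) :
    ∃ lstar > 0, ∀ (α : ℝ) (a : ℕ → ℕ), (∀ i, a i ∈ 𝒜) → cfLim a α →
      ∀ ℓ : ℝ, lstar < ℓ →
      ∃ t ∈ Set.Icc (-(ℓ / 2)) (ℓ / 2), ∃ m n : ℤ,
        Real.sqrt
          (((q₁ : ℝ) + t / Real.sqrt (1 + α ^ 2) - ((q₁' : ℝ) + m)) ^ 2 +
           ((q₂ : ℝ) + t * α / Real.sqrt (1 + α ^ 2) - ((q₂' : ℝ) + n)) ^ 2) < ε := by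
  obtain ⟨N, hN⟩ := (isCompact_cfSet h𝒜).exists_natAbs_le_forall_int_mul_add_int_near
    (fun _ => irrational_of_mem_cfSet h𝒜) hε
  set c : ℝ := q₁' - q₁
  refine ⟨4 * (|c| + N) + 1, by positivity, fun α a ha hlim ℓ hℓ => ?_⟩
  have hα := mem_cfSet_of_cfLim h𝒜 ha hlim
  obtain ⟨hα0, hα1⟩ := cfSet_subset_Icc hα
  obtain ⟨M, n, hMN, hnear⟩ := hN α hα (q₂' - q₂ - c * α)
  set s := √(1 + α ^ 2)
  have hs0 : 0 < s := by positivity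
  have hs2 : s ≤ 2 := Real.sqrt_le_iff.mpr ⟨by norm_num, by nlinarith⟩
  refine ⟨s * (c + M), ?_, M, -n, ?_⟩
  · have hM : |(M : ℝ)| ≤ N := by rw [← Int.cast_abs, ← Nat.cast_natAbs]; exact_mod_cast hMN
    have : |s * (c + M)| ≤ 2 * (|c| + N) := by
      rw [abs_mul, abs_of_pos hs0]
      exact mul_le_mul hs2 ((abs_add_le _ _).trans (by linarith)) (abs_nonneg _) zero_le_two
    exact abs_le.mp (this.trans (by linarith))
  · have h₁ : (q₁ : ℝ) + s * (c + M) / s - (q₁' + M) = 0 := by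
      rw [mul_div_cancel_left₀ _ hs0.ne']
      ring
    have h₂ : (q₂ : ℝ) + s * (c + M) * α / s - (q₂' + ((-n : ℤ) : ℝ))
        = M * α + n - (q₂' - q₂ - c * α) := by
      rw [mul_assoc, mul_div_cancel_left₀ _ hs0.ne']
      push_cast
      ring
    rwa [h₁, h₂, zero_pow two_ne_zero, zero_add, Real.sqrt_sq_eq_abs]
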